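/- There exists a universal constant C > 0 with the following property. For all signs s₁, s₂ ∈ {+1, −1}, all k₁, k₂ ∈ ℕ, all integers l with 1 ≤ l ≤ min(k₁, k₂) + 10, all unit vectors ω₁, ω₂ ∈ ℝ² with |s₁ω₁ − s₂ω₂| ≤ 2^{−l+2}, and all vectors v₁, v₂ ∈ ℂ², one has |⟨Π_{s₁}(2^{k₁}ω₁)v₁, γ⁰·Π_{s₂}(2^{k₂}ω₂)v₂⟩_{ℂ²}| ≤ C·2^{−l}·|v₁|·|v₂|, where ⟨·,·⟩_{ℂ²} is the Hermitian inner product on ℂ². -/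

import Mathlib

noncomputable section

/-- ℝ² as a Euclidean space. -/
abbrev E2 := EuclideanSpace ℝ (Fin 2)

/-- The Japanese bracket `⟨ξ⟩_M = √(M² + |ξ|²)`. -/
def jb (M : ℝ) (ξ : E2) : ℝ := Real.sqrt (M ^ 2 + ‖ξ‖ ^ 2)

/-- The Pauli matrix σ¹. -/
def σ1 : Matrix (Fin 2) (Fin 2) ℂ := !![0, 1; 1, 0]

/-- The Pauli matrix σ². -/
def σ2 : Matrix (Fin 2) (Fin 2) ℂ := !![0, -Complex.I; Complex.I, 0]

/-- The Dirac matrix γ⁰. -/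
def γ0 : Matrix (Fin 2) (Fin 2) ℂ := !![1, 0; 0, -1]

/-- The projection `Π^M_s(ξ) = (1/2)[I + s·⟨ξ⟩_M⁻¹(ξ₁σ¹ + ξ₂σ² + Mγ⁰)]`, `s = ±1`. -/
def PiM (M s : ℝ) (ξ : E2) : Matrix (Fin 2) (Fin 2) ℂ :=
  (2 : ℂ)⁻¹ • (1 + ((s / jb M ξ : ℝ) : ℂ) •
    (((ξ 0 : ℝ) : ℂ) • σ1 + ((ξ 1 : ℝ) : ℂ) • σ2 + ((M : ℝ) : ℂ) • γ0))

/-- The operator norm on ℂ² of a 2×2 complex matrix. -/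
def opNorm (A : Matrix (Fin 2) (Fin 2) ℂ) : ℝ := ‖Matrix.toEuclideanCLM (𝕜 := ℂ) A‖

/-- A 2×2 complex matrix acting on ℂ². -/
def matApp (A : Matrix (Fin 2) (Fin 2) ℂ) (v : EuclideanSpace ℂ (Fin 2)) :
    EuclideanSpace ℂ (Fin 2) := Matrix.toEuclideanCLM (𝕜 := ℂ) A v

/-!
Write `P(ξ, t) = ξ₁σ¹ + ξ₂σ² + tγ⁰`. It is Hermitian with `P(ξ, t)² = |ξ|² + t²`, so by the
C*-identity `‖P(ξ, t)‖ = √(|ξ|² + t²)`, and `Π_s(ξ) = (1 + P(n))/2` for the unit vector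
`n = (s/⟨ξ⟩)(ξ, 1)` of `ℝ³`. As `γ⁰` anticommutes with `σ¹, σ²`, it moves past `Π(m)` by flipping
the horizontal part of `m`; then `(1 + P(n))(1 - P(n)) = 1 - P(n)² = 0` turns `Π(n) γ⁰ Π(m)` into
`Π(n) P(n_h - m_h, n₃ + m₃) γ⁰ / 2`, of norm at most `(|n_h - m_h| + |n₃ + m₃|)/2`.
The horizontal parts are `sᵢωᵢ` up to errors `1/⟨ξᵢ⟩`, and `|n₃ + m₃| ≤ 1/⟨ξ₁⟩ + 1/⟨ξ₂⟩`;
since `⟨2^k ω⟩ ≥ 2^k ≥ 2^(l-10)`, everything is `O(2^(-l))`.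
-/

open scoped Matrix Matrix.Norms.L2Operator

lemma matApp_mul (A B : Matrix (Fin 2) (Fin 2) ℂ) (v : EuclideanSpace ℂ (Fin 2)) :
    matApp (A * B) v = matApp A (matApp B v) := by
  simp [matApp]

lemma inner_matApp_left (A : Matrix (Fin 2) (Fin 2) ℂ) (v w : EuclideanSpace ℂ (Fin 2)) :
    inner ℂ (matApp A v) w = inner ℂ v (matApp Aᴴ w) := by
  rw [matApp, matApp, ← Matrix.star_eq_conjTranspose, map_star,
    ContinuousLinearMap.star_eq_adjoint, ContinuousLinearMap.adjoint_inner_right]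

lemma norm_matApp_le (A : Matrix (Fin 2) (Fin 2) ℂ) (v : EuclideanSpace ℂ (Fin 2)) :
    ‖matApp A v‖ ≤ ‖A‖ * ‖v‖ :=
  (Matrix.toEuclideanCLM (𝕜 := ℂ) A).le_opNorm v

lemma norm_inner_matApp_le (A B : Matrix (Fin 2) (Fin 2) ℂ) (v w : EuclideanSpace ℂ (Fin 2)) :
    ‖inner ℂ (matApp A v) (matApp B w)‖ ≤ ‖Aᴴ * B‖ * ‖v‖ * ‖w‖ := by
  rw [inner_matApp_left, ← matApp_mul, mul_assoc]
  exact (norm_inner_le_norm _ _).trans <| by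
    rw [mul_left_comm]; gcongr; exact norm_matApp_le _ _

def pauli (ξ : E2) (t : ℝ) : Matrix (Fin 2) (Fin 2) ℂ :=
  ((ξ 0 : ℝ) : ℂ) • σ1 + ((ξ 1 : ℝ) : ℂ) • σ2 + (t : ℂ) • γ0

lemma pauli_conjTranspose (ξ : E2) (t : ℝ) : (pauli ξ t)ᴴ = pauli ξ t := by
  ext i j
  fin_cases i <;> fin_cases j <;> simp [pauli, σ1, σ2, γ0, Matrix.conjTranspose_apply]

lemma pauli_mul_self (ξ : E2) (t : ℝ) :
    pauli ξ t * pauli ξ t = ((‖ξ‖ ^ 2 + t ^ 2 : ℝ) : ℂ) • 1 := by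
  rw [EuclideanSpace.norm_sq_eq, Fin.sum_univ_two]
  ext i j
  fin_cases i <;> fin_cases j <;> simp [pauli, σ1, σ2, γ0, Matrix.mul_apply, Fin.sum_univ_two] <;>
    ring_nf <;> simp [Complex.I_sq]

lemma pauli_add (ξ η : E2) (t u : ℝ) : pauli ξ t + pauli η u = pauli (ξ + η) (t + u) := by
  simp only [pauli, PiLp.add_apply]; push_cast; module

lemma γ0_mul_pauli (ξ : E2) (t : ℝ) : γ0 * pauli ξ t = pauli (-ξ) t * γ0 := by
  ext i j
  fin_cases i <;> fin_cases j <;> simp [pauli, σ1, σ2, γ0, Matrix.mul_apply, Fin.sum_univ_two] <;>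
    ring

lemma γ0_eq_pauli : γ0 = pauli 0 1 := by simp [pauli]

lemma norm_pauli (ξ : E2) (t : ℝ) : ‖pauli ξ t‖ = √(‖ξ‖ ^ 2 + t ^ 2) := by
  have h := Matrix.l2_opNorm_conjTranspose_mul_self (pauli ξ t)
  rw [pauli_conjTranspose, pauli_mul_self, norm_smul, norm_one, mul_one, Complex.norm_real,
    Real.norm_of_nonneg (by positivity)] at h
  rw [h, Real.sqrt_mul_self (norm_nonneg _)]

def spinProj (ξ : E2) (t : ℝ) : Matrix (Fin 2) (Fin 2) ℂ := (2 : ℂ)⁻¹ • (1 + pauli ξ t)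

lemma PiM_eq_spinProj (M s : ℝ) (ξ : E2) :
    PiM M s ξ = spinProj ((s / jb M ξ) • ξ) (s / jb M ξ * M) := by
  simp only [PiM, spinProj, pauli, PiLp.smul_apply, smul_eq_mul]
  push_cast
  module

lemma spinProj_conjTranspose (ξ : E2) (t : ℝ) : (spinProj ξ t)ᴴ = spinProj ξ t := by
  simp [spinProj, Matrix.conjTranspose_smul, pauli_conjTranspose]

lemma PiM_conjTranspose (M s : ℝ) (ξ : E2) : (PiM M s ξ)ᴴ = PiM M s ξ := by
  rw [PiM_eq_spinProj, spinProj_conjTranspose]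

lemma norm_spinProj_le {ξ : E2} {t : ℝ} (h : ‖ξ‖ ^ 2 + t ^ 2 = 1) : ‖spinProj ξ t‖ ≤ 1 := by
  have hP : ‖pauli ξ t‖ = 1 := by rw [norm_pauli, h, Real.sqrt_one]
  calc ‖spinProj ξ t‖ ≤ 2⁻¹ * (‖(1 : Matrix (Fin 2) (Fin 2) ℂ)‖ + ‖pauli ξ t‖) := by
        rw [spinProj, norm_smul]
        simp only [norm_inv, RCLike.norm_ofNat]
        gcongr
        exact norm_add_le _ _
    _ = 1 := by rw [CStarRing.norm_one, hP]; norm_num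

lemma spinProj_mul_spinProj {ξ : E2} {t : ℝ} (h : ‖ξ‖ ^ 2 + t ^ 2 = 1) (η : E2) (u : ℝ) :
    spinProj ξ t * spinProj η u = (2 : ℂ)⁻¹ • (spinProj ξ t * pauli (ξ + η) (t + u)) := by
  set P := pauli ξ t
  set Q := pauli η u
  have hsq : P * P = 1 := by rw [pauli_mul_self, h]; simp
  have key : (1 + P) * (1 + Q) = (1 + P) * (P + Q) :=
    calc (1 + P) * (1 + Q) = (1 + P) * (P + Q) + (1 - P * P) := by noncomm_ring
      _ = (1 + P) * (P + Q) := by rw [hsq, sub_self, add_zero]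
  rw [← pauli_add]
  simp only [spinProj, Matrix.smul_mul, Matrix.mul_smul, smul_smul]
  exact congrArg _ key

lemma spinProj_mul_γ0_mul_spinProj {ξ : E2} {t : ℝ} (h : ‖ξ‖ ^ 2 + t ^ 2 = 1) (η : E2) (u : ℝ) :
    spinProj ξ t * γ0 * spinProj η u = (2 : ℂ)⁻¹ • (spinProj ξ t * pauli (ξ - η) (t + u) * γ0) := by
  have : γ0 * spinProj η u = spinProj (-η) u * γ0 := by
    simp only [spinProj, Matrix.mul_smul, Matrix.smul_mul, mul_add, add_mul, mul_one, one_mul,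
      γ0_mul_pauli]
  rw [mul_assoc, this, ← mul_assoc, spinProj_mul_spinProj h, sub_eq_add_neg, Matrix.smul_mul]

lemma norm_spinProj_mul_γ0_mul_spinProj_le {ξ η : E2} {t u : ℝ} (hξ : ‖ξ‖ ^ 2 + t ^ 2 = 1) :
    ‖spinProj ξ t * γ0 * spinProj η u‖ ≤ 2⁻¹ * (‖ξ - η‖ + |t + u|) := by
  have hγ0 : ‖γ0‖ = 1 := by rw [γ0_eq_pauli, norm_pauli]; simp
  rw [spinProj_mul_γ0_mul_spinProj hξ, norm_smul]
  simp only [norm_inv, RCLike.norm_ofNat]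
  gcongr
  calc ‖spinProj ξ t * pauli (ξ - η) (t + u) * γ0‖
      ≤ ‖spinProj ξ t‖ * ‖pauli (ξ - η) (t + u)‖ * ‖γ0‖ := norm_mul₃_le
    _ ≤ 1 * (‖ξ - η‖ + |t + u|) * 1 := by
        rw [hγ0, norm_pauli]
        gcongr
        · exact norm_spinProj_le hξ
        · exact Real.sqrt_le_iff.mpr ⟨by positivity,
            by nlinarith [sq_abs (t + u), abs_nonneg (t + u), norm_nonneg (ξ - η)]⟩
    _ = ‖ξ - η‖ + |t + u| := by ring

lemma sq_jb (M : ℝ) (ξ : E2) : jb M ξ ^ 2 = M ^ 2 + ‖ξ‖ ^ 2 :=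
  Real.sq_sqrt (by positivity)

lemma norm_le_jb (M : ℝ) (ξ : E2) : ‖ξ‖ ≤ jb M ξ :=
  Real.le_sqrt_of_sq_le (by nlinarith)

lemma jb_le_abs_add_norm (M : ℝ) (ξ : E2) : jb M ξ ≤ |M| + ‖ξ‖ :=
  Real.sqrt_le_iff.mpr ⟨by positivity, by nlinarith [sq_abs M, abs_nonneg M, norm_nonneg ξ]⟩

lemma jb_pos {M : ℝ} (hM : M ≠ 0) (ξ : E2) : 0 < jb M ξ :=
  Real.sqrt_pos.mpr (by positivity)

lemma norm_sq_add_sq_eq_one_of_jb {M s : ℝ} (hM : M ≠ 0) (hs : |s| = 1) (ξ : E2) :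
    ‖(s / jb M ξ) • ξ‖ ^ 2 + (s / jb M ξ * M) ^ 2 = 1 := by
  have hJ := (jb_pos hM ξ).ne'
  have hs2 : s ^ 2 = 1 := by rw [← sq_abs, hs, one_pow]
  rw [norm_smul, Real.norm_eq_abs, mul_pow, sq_abs, div_pow, hs2]
  field_simp
  linear_combination M ^ 2 * hs2 - sq_jb M ξ

lemma norm_div_jb_smul_sub_le {s : ℝ} (hs : |s| = 1) (M : ℝ) (ξ : E2) :
    ‖(s / jb M ξ) • ξ - s • (‖ξ‖⁻¹ • ξ)‖ ≤ |M| / jb M ξ := by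
  rw [div_eq_mul_inv, mul_smul, ← smul_sub, norm_smul, Real.norm_eq_abs, hs, one_mul,
    ← sub_smul, norm_smul, Real.norm_eq_abs]
  rcases eq_or_ne ‖ξ‖ 0 with h0 | h0
  · rw [h0, mul_zero]; exact div_nonneg (abs_nonneg M) (Real.sqrt_nonneg _)
  have hξ : 0 < ‖ξ‖ := (norm_nonneg ξ).lt_of_ne' h0
  have hJ : ‖ξ‖ ≤ jb M ξ := norm_le_jb M ξ
  have hJM : jb M ξ ≤ |M| + ‖ξ‖ := jb_le_abs_add_norm M ξ
  rw [abs_of_nonpos (sub_nonpos.mpr (inv_anti₀ hξ hJ)), neg_sub]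
  calc (‖ξ‖⁻¹ - (jb M ξ)⁻¹) * ‖ξ‖ = (jb M ξ - ‖ξ‖) / jb M ξ := by
        field_simp [(hξ.trans_le hJ).ne']
    _ ≤ |M| / jb M ξ := div_le_div_of_nonneg_right (by linarith) (hξ.trans_le hJ).le

lemma norm_PiM_mul_γ0_mul_PiM_le {M s₁ s₂ : ℝ} (hM : M ≠ 0) (hs₁ : |s₁| = 1) (hs₂ : |s₂| = 1)
    (ξ₁ ξ₂ : E2) :
    ‖PiM M s₁ ξ₁ * γ0 * PiM M s₂ ξ₂‖ ≤
      2⁻¹ * (‖s₁ • (‖ξ₁‖⁻¹ • ξ₁) - s₂ • (‖ξ₂‖⁻¹ • ξ₂)‖ + 2 * |M| / jb M ξ₁ +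
        2 * |M| / jb M ξ₂) := by
  rw [PiM_eq_spinProj, PiM_eq_spinProj]
  refine (norm_spinProj_mul_γ0_mul_spinProj_le (norm_sq_add_sq_eq_one_of_jb hM hs₁ ξ₁)).trans ?_
  have hJ₁ := jb_pos hM ξ₁
  have hJ₂ := jb_pos hM ξ₂
  have hξ : ‖(s₁ / jb M ξ₁) • ξ₁ - (s₂ / jb M ξ₂) • ξ₂‖ ≤
      ‖s₁ • (‖ξ₁‖⁻¹ • ξ₁) - s₂ • (‖ξ₂‖⁻¹ • ξ₂)‖ + |M| / jb M ξ₁ + |M| / jb M ξ₂ := by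
    have h₁ := norm_div_jb_smul_sub_le hs₁ M ξ₁
    have h₂ := norm_div_jb_smul_sub_le hs₂ M ξ₂
    rw [norm_sub_rev] at h₂
    have := norm_sub_le_norm_sub_add_norm_sub ((s₁ / jb M ξ₁) • ξ₁) (s₁ • (‖ξ₁‖⁻¹ • ξ₁))
      ((s₂ / jb M ξ₂) • ξ₂)
    have := norm_sub_le_norm_sub_add_norm_sub (s₁ • (‖ξ₁‖⁻¹ • ξ₁)) (s₂ • (‖ξ₂‖⁻¹ • ξ₂))
      ((s₂ / jb M ξ₂) • ξ₂)
    linarith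
  have ht : |s₁ / jb M ξ₁ * M + s₂ / jb M ξ₂ * M| ≤ |M| / jb M ξ₁ + |M| / jb M ξ₂ := by
    refine (abs_add_le _ _).trans_eq ?_
    simp only [abs_mul, abs_div, hs₁, hs₂, abs_of_pos hJ₁, abs_of_pos hJ₂]
    ring
  rw [mul_div_assoc, mul_div_assoc]
  linarith

lemma inv_norm_smul_smul_of_norm_eq_one {r : ℝ} (hr : 0 < r) {ω : E2} (hω : ‖ω‖ = 1) :
    ‖r • ω‖⁻¹ • (r • ω) = ω := by
  rw [norm_smul, hω, mul_one, Real.norm_of_nonneg hr.le, smul_smul, inv_mul_cancel₀ hr.ne',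
    one_smul]

lemma inv_jb_two_pow_smul_le {k : ℕ} {l : ℤ} (hl : l ≤ k + 10) {ω : E2} (hω : ‖ω‖ = 1) :
    (jb 1 ((2 : ℝ) ^ k • ω))⁻¹ ≤ 2 ^ 10 * (2 : ℝ) ^ (-(l : ℝ)) := by
  have hξ : ‖(2 : ℝ) ^ k • ω‖ = 2 ^ k := by
    rw [norm_smul, hω, mul_one, Real.norm_of_nonneg (by positivity)]
  have hlk : (l : ℝ) ≤ k + 10 := by exact_mod_cast hl
  calc (jb 1 ((2 : ℝ) ^ k • ω))⁻¹ ≤ ‖(2 : ℝ) ^ k • ω‖⁻¹ :=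
        inv_anti₀ (by rw [hξ]; positivity) (norm_le_jb 1 _)
    _ = ((2 : ℝ) ^ k)⁻¹ := by rw [hξ]
    _ = (2 : ℝ) ^ (-(k : ℝ)) := by rw [Real.rpow_neg zero_le_two, Real.rpow_natCast]
    _ ≤ (2 : ℝ) ^ ((10 : ℝ) + -(l : ℝ)) :=
        Real.rpow_le_rpow_of_exponent_le one_le_two (by linarith)
    _ = 2 ^ 10 * (2 : ℝ) ^ (-(l : ℝ)) := by rw [Real.rpow_add two_pos]; norm_num

theorem stmt15 :
    ∃ C : ℝ, 0 < C ∧ ∀ (s₁ s₂ : ℝ), (s₁ = 1 ∨ s₁ = -1) → (s₂ = 1 ∨ s₂ = -1) →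
      ∀ (k₁ k₂ : ℕ) (l : ℤ), 1 ≤ l → l ≤ (min k₁ k₂ : ℤ) + 10 →
      ∀ (ω₁ ω₂ : E2), ‖ω₁‖ = 1 → ‖ω₂‖ = 1 →
      ‖s₁ • ω₁ - s₂ • ω₂‖ ≤ (2 : ℝ) ^ (-(l : ℝ) + 2) →
      ∀ (v₁ v₂ : EuclideanSpace ℂ (Fin 2)),
      ‖(inner ℂ (matApp (PiM 1 s₁ ((2 : ℝ) ^ k₁ • ω₁)) v₁)
          (matApp γ0 (matApp (PiM 1 s₂ ((2 : ℝ) ^ k₂ • ω₂)) v₂)) : ℂ)‖ ≤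
        C * (2 : ℝ) ^ (-(l : ℝ)) * ‖v₁‖ * ‖v₂‖ := by
  refine ⟨2050, by norm_num, ?_⟩
  intro s₁ s₂ hs₁ hs₂ k₁ k₂ l _ hl ω₁ ω₂ hω₁ hω₂ hsep v₁ v₂
  have hsep' : ‖s₁ • ω₁ - s₂ • ω₂‖ ≤ 4 * (2 : ℝ) ^ (-(l : ℝ)) := by
    rwa [Real.rpow_add two_pos, mul_comm, Real.rpow_two, show (2 : ℝ) ^ 2 = 4 by norm_num] at hsep
  have h₁ := inv_jb_two_pow_smul_le (k := k₁) (l := l) (by omega) hω₁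
  have h₂ := inv_jb_two_pow_smul_le (k := k₂) (l := l) (by omega) hω₂
  have hPi := norm_PiM_mul_γ0_mul_PiM_le one_ne_zero ((abs_eq zero_le_one).mpr hs₁)
    ((abs_eq zero_le_one).mpr hs₂) ((2 : ℝ) ^ k₁ • ω₁) ((2 : ℝ) ^ k₂ • ω₂)
  rw [inv_norm_smul_smul_of_norm_eq_one (by positivity) hω₁,
    inv_norm_smul_smul_of_norm_eq_one (by positivity) hω₂, abs_one, mul_one, div_eq_mul_inv,
    div_eq_mul_inv] at hPi
  rw [← matApp_mul]
  refine (norm_inner_matApp_le _ _ v₁ v₂).trans ?_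
  rw [PiM_conjTranspose, ← mul_assoc]
  gcongr
  linarith
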